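/- Let H be an arrangement with lattice of flats L_H, fix an ordering of I, and define the broken circuit sheaf R^{bc} on L_H with stalk at a flat F the face ring R[Δ^{bc}_{H_F}] of the broken circuit complex of the localization H_F, and restriction maps induced by the inclusions Δ^{bc}_{H_E} ⊆ Δ^{bc}_{H_F} for E ≤ F. Then for any open set U ⊆ L_H, the sections R^{bc}(U) are isomorphic to the face ring of the union ∪_{F∈U} Δ^{bc}_{H_F}. -/

import Mathlib

/-!
For a simplicial complex `Δ`, a polynomial lies in the face ideal of `Δ` exactly when all its
monomials are supported outside `Δ`; so an element of the face ring `ℝ[Δ]` is the same as a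
coefficient function on monomials supported in `Δ`. This gives the kernel at once. For the
sections, a compatible family yields coefficient functions on the complexes `Δ^{bc}_{H_F}` that
agree on overlaps: a monomial supported in `Δ^{bc}_{H_F}` and in `Δ^{bc}_{H_F'}` is supported in
`Δ^{bc}_{H_{F ∩ F'}}`, where `F ∩ F'` is again a flat in `U`, and `Δ^{bc}_{H_E} ⊆ Δ^{bc}_{H_F}`
for flats `E ⊆ F` because a flat containing all but one element of a circuit inside `F` contains
the whole circuit. Since `U` is finite, these coefficients glue to a single polynomial.
-/

open MvPolynomial

variable {I : Type} [Fintype I] [DecidableEq I] [LinearOrder I]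

def IsFlat (V : AffineSubspace ℝ (I → ℝ)) (F : Finset I) : Prop :=
  ∃ x ∈ V, ∀ i : I, i ∈ F ↔ x i = 0

noncomputable def resF (V : AffineSubspace ℝ (I → ℝ)) (F : Finset I) :
    V.direction →ₗ[ℝ] ({i : I // i ∈ F} → ℝ) :=
  (LinearMap.funLeft ℝ ℝ (fun i : {i : I // i ∈ F} => (i : I))).comp V.direction.subtype

/-- `S` is a face of the matroid complex of the arrangement: the (linearized)
evaluation map `V₀ → ℝ^S` is surjective. -/
def Face (V : AffineSubspace ℝ (I → ℝ)) (S : Finset I) : Prop :=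
  Function.Surjective (resF V S)

/-- A circuit: a minimal non-face of the matroid complex. -/
def Circuit (V : AffineSubspace ℝ (I → ℝ)) (C : Finset I) : Prop :=
  ¬ Face V C ∧ ∀ D : Finset I, D ⊂ C → Face V D

/-- `S` is a face of the broken circuit complex `Δ^{bc}_{H_F}` of the localization of
the arrangement at the flat `F` (with respect to the fixed ordering of `I`): `S ⊆ F`,
`S` is a face of the matroid complex, and `S` contains no broken circuit, i.e. no set
`C ∖ {min C}` for a circuit `C ⊆ F`. -/
def BCFace (V : AffineSubspace ℝ (I → ℝ)) (F : Finset I) (S : Finset I) : Prop :=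
  S ⊆ F ∧ Face V S ∧
    ∀ C : Finset I, Circuit V C → C ⊆ F →
      ∀ m ∈ C, (∀ j ∈ C, m ≤ j) → ¬ C.erase m ⊆ S

noncomputable def faceIdeal (Δ : Set (Finset I)) : Ideal (MvPolynomial I ℝ) :=
  Ideal.span {p | ∃ S : Finset I, S ∉ Δ ∧ p = ∏ i ∈ S, (X i : MvPolynomial I ℝ)}

/-- The map from `ℝ[e_i : i ∈ I]` to the product over `F ∈ U` of the stalks
`R^{bc}(F) = ℝ[Δ^{bc}_{H_F}]` of the broken circuit sheaf. -/
noncomputable def toBCStalks (V : AffineSubspace ℝ (I → ℝ)) (U : Set (Finset I)) :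
    MvPolynomial I ℝ →+*
      ((F : U) → MvPolynomial I ℝ ⧸ faceIdeal {S | BCFace V F.1 S}) :=
  Pi.ringHom fun F => Ideal.Quotient.mk (faceIdeal {S | BCFace V F.1 S})

theorem MvPolynomial.exists_coeff_eq_of_agree {σ R ι : Type*} [CommSemiring R] [Finite ι]
    (A : ι → Set (σ →₀ ℕ)) (q : ι → MvPolynomial σ R)
    (h : ∀ i j, ∀ d ∈ A i, d ∈ A j → coeff d (q i) = coeff d (q j)) :
    ∃ p : MvPolynomial σ R, ∀ i, ∀ d ∈ A i, coeff d p = coeff d (q i) := by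
  classical
  have := Fintype.ofFinite ι
  let c : (σ →₀ ℕ) → R := fun d =>
    if hd : ∃ i, d ∈ A i then coeff d (q hd.choose) else 0
  have hc : ∀ d, c d ≠ 0 → d ∈ Finset.univ.biUnion fun i => (q i).support := by
    intro d hcd
    by_cases hd : ∃ i, d ∈ A i
    · simp only [c, dif_pos hd] at hcd
      exact Finset.mem_biUnion.2 ⟨_, Finset.mem_univ _, mem_support_iff.2 hcd⟩
    · simp [c, dif_neg hd] at hcd
  refine ⟨AddMonoidAlgebra.ofCoeff (Finsupp.onFinset _ c hc), fun i d hd => ?_⟩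
  have hd' : ∃ i, d ∈ A i := ⟨i, hd⟩
  change c d = _
  simp only [c, dif_pos hd']
  exact h _ _ d hd'.choose_spec hd

theorem Finsupp.sum_single_one_le_iff {σ : Type*} (S : Finset σ) (d : σ →₀ ℕ) :
    ∑ i ∈ S, Finsupp.single i 1 ≤ d ↔ S ⊆ d.support := by
  classical
  simp only [Finsupp.le_def, Finsupp.finsetSum_apply, Finsupp.single_apply,
    Finset.sum_ite_eq', Finset.subset_iff, Finsupp.mem_support_iff]
  refine forall_congr' fun j => ?_
  split_ifs with hj <;> simp [hj, Nat.one_le_iff_ne_zero]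

section FaceIdeal

variable {σ : Type} {Δ : Set (Finset σ)}

theorem faceIdeal_antitone : Antitone (faceIdeal (I := σ)) := fun _ _ h =>
  Ideal.span_mono fun _ ⟨S, hS, hp⟩ => ⟨S, fun hS' => hS (h hS'), hp⟩

theorem mem_faceIdeal_iff (hΔ : IsLowerSet Δ) {p : MvPolynomial σ ℝ} :
    p ∈ faceIdeal Δ ↔ ∀ d ∈ p.support, d.support ∉ Δ := by
  have hgen : {p | ∃ S : Finset σ, S ∉ Δ ∧ p = ∏ i ∈ S, (X i : MvPolynomial σ ℝ)} =
      (fun d => monomial d 1) '' ((fun S => ∑ i ∈ S, Finsupp.single i 1) '' Δᶜ) := by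
    ext p
    simp [X, ← monomial_sum_one, eq_comm]
  rw [faceIdeal, hgen, mem_ideal_span_monomial_image]
  refine forall₂_congr fun d _ => ?_
  simp only [Set.mem_image, Set.mem_compl_iff, exists_exists_and_eq_and,
    Finsupp.sum_single_one_le_iff]
  exact ⟨fun ⟨S, hS, hSd⟩ hd => hS (hΔ hSd hd), fun hd => ⟨d.support, hd, subset_rfl⟩⟩

theorem mk_eq_mk_faceIdeal_iff (hΔ : IsLowerSet Δ) {p q : MvPolynomial σ ℝ} :
    Ideal.Quotient.mk (faceIdeal Δ) p = Ideal.Quotient.mk (faceIdeal Δ) q ↔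
      ∀ d : σ →₀ ℕ, d.support ∈ Δ → coeff d p = coeff d q := by
  rw [Ideal.Quotient.mk_eq_mk_iff_sub_mem, mem_faceIdeal_iff hΔ]
  simp only [mem_support_iff, coeff_sub, sub_ne_zero]
  exact forall_congr' fun d => not_imp_not

end FaceIdeal

section Matroid

variable {σ : Type} {V : AffineSubspace ℝ (σ → ℝ)}

theorem Face.mono {S T : Finset σ} (hST : S ⊆ T) (hT : Face V T) : Face V S := by
  have hincl : Function.Injective (Set.inclusion hST) := Set.inclusion_injective hST
  exact (LinearMap.funLeft_surjective_of_injective ℝ ℝ _ hincl).comp hT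

theorem Face.insert [DecidableEq σ] {S : Finset σ} (hS : Face V S) {v : σ → ℝ}
    (hv : v ∈ V.direction) (hvS : ∀ i ∈ S, v i = 0) {m : σ} (hvm : v m ≠ 0) :
    Face V (insert m S) := by
  -- correct a preimage of `g` on `S` along `v`, which is invisible on `S`
  intro g
  obtain ⟨w, hw⟩ := hS fun i => g ⟨i, Finset.mem_insert_of_mem i.2⟩
  let c := (g ⟨m, Finset.mem_insert_self m S⟩ - (w : σ → ℝ) m) / v m
  refine ⟨w + c • ⟨v, hv⟩, funext fun i => ?_⟩
  change (w : σ → ℝ) i + c * v i = g i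
  by_cases him : (i : σ) = m
  · obtain ⟨i, hi⟩ := i
    dsimp only at him
    subst him
    simp [c, div_mul_cancel₀ _ hvm]
  · have hiS : (i : σ) ∈ S := (Finset.mem_insert.1 i.2).resolve_left him
    rw [hvS i hiS, mul_zero, add_zero]
    exact congrFun hw ⟨i, hiS⟩

theorem IsFlat.mem_of_circuit [DecidableEq σ] {E F C : Finset σ} {m : σ} (hE : IsFlat V E)
    (hF : IsFlat V F) (hC : Circuit V C) (hCF : C ⊆ F) (hm : m ∈ C) (hCE : C.erase m ⊆ E) :
    m ∈ E := by
  obtain ⟨x, hx, hxE⟩ := hE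
  obtain ⟨y, hy, hyF⟩ := hF
  -- otherwise `x - y` vanishes on `C.erase m` but not at `m`, which would make `C` a face
  by_contra hmE
  have hv : x - y ∈ V.direction := by simpa using AffineSubspace.vsub_mem_direction hx hy
  have hvC : ∀ i ∈ C.erase m, (x - y) i = 0 := fun i hi => by
    simp [(hxE i).1 (hCE hi), (hyF i).1 (hCF (Finset.mem_of_mem_erase hi))]
  have hvm : (x - y) m ≠ 0 := by
    simpa [(hyF m).1 (hCF hm)] using mt (hxE m).2 hmE
  apply hC.1
  simpa [Finset.insert_erase hm] using
    (hC.2 _ (Finset.erase_ssubset hm)).insert hv hvC hvm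

theorem IsFlat.inter [Fintype σ] [DecidableEq σ] {F F' : Finset σ} (hF : IsFlat V F)
    (hF' : IsFlat V F') : IsFlat V (F ∩ F') := by
  obtain ⟨x, hx, hxF⟩ := hF
  obtain ⟨y, hy, hyF'⟩ := hF'
  -- for `t` outside the finitely many roots, `(1 - t) • x + t • y` vanishes exactly where
  -- `x` and `y` both do
  obtain ⟨t, ht⟩ := Infinite.exists_notMem_finset
    (Finset.univ.image fun i => x i / (x i - y i))
  refine ⟨AffineMap.lineMap x y t, AffineMap.lineMap_mem t hx hy, fun i => ?_⟩
  rw [Finset.mem_inter, hxF, hyF', AffineMap.lineMap_apply_module]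
  simp only [Pi.add_apply, Pi.smul_apply, smul_eq_mul]
  constructor
  · rintro ⟨hxi, hyi⟩
    simp [hxi, hyi]
  · intro h
    by_cases hxy : x i = y i
    · rw [← hxy] at h ⊢
      have : x i = 0 := by linarith
      exact ⟨this, this⟩
    · refine absurd (Finset.mem_image.2 ⟨i, Finset.mem_univ i, ?_⟩) ht
      rw [div_eq_iff (sub_ne_zero.2 hxy)]
      linarith

theorem isLowerSet_setOf_bcFace [DecidableEq σ] [LinearOrder σ] (F : Finset σ) :
    IsLowerSet {S | BCFace V F S} := fun _ _ hST ⟨hTF, hT, hbc⟩ =>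
  ⟨hST.trans hTF, hT.mono hST,
    fun C hC hCF m hm hmin hCS => hbc C hC hCF m hm hmin (hCS.trans hST)⟩

theorem BCFace.inter_right [DecidableEq σ] [LinearOrder σ] {F F' S : Finset σ}
    (hS : BCFace V F S) (hSF' : S ⊆ F') : BCFace V (F ∩ F') S :=
  ⟨Finset.subset_inter hS.1 hSF', hS.2.1,
    fun C hC hCF => hS.2.2 C hC (hCF.trans Finset.inter_subset_left)⟩

theorem BCFace.mono_flat [DecidableEq σ] [LinearOrder σ] {E F S : Finset σ} (hE : IsFlat V E)
    (hF : IsFlat V F) (hEF : E ⊆ F) (hS : BCFace V E S) : BCFace V F S := by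
  refine ⟨hS.1.trans hEF, hS.2.1, fun C hC hCF m hm hmin hCS => ?_⟩
  have hCE : C.erase m ⊆ E := hCS.trans hS.1
  have hmE : m ∈ E := hE.mem_of_circuit hF hC hCF hm hCE
  refine hS.2.2 C hC ?_ m hm hmin hCS
  rw [← Finset.insert_erase hm]
  exact Finset.insert_subset hmE hCE

end Matroid

theorem ker_toBCStalks {σ : Type} [DecidableEq σ] [LinearOrder σ]
    (V : AffineSubspace ℝ (σ → ℝ)) (U : Set (Finset σ)) :
    RingHom.ker (toBCStalks V U) = faceIdeal {S | ∃ F ∈ U, BCFace V F S} := by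
  have hunion : IsLowerSet {S | ∃ F ∈ U, BCFace V F S} := fun _ _ hST ⟨F, hF, hT⟩ =>
    ⟨F, hF, isLowerSet_setOf_bcFace F hST hT⟩
  have hstalk : ∀ (p : MvPolynomial σ ℝ) (F : U),
      toBCStalks V U p F = 0 ↔ ∀ d ∈ p.support, ¬BCFace V F d.support := fun _ _ =>
    Ideal.Quotient.eq_zero_iff_mem.trans (mem_faceIdeal_iff (isLowerSet_setOf_bcFace _))
  ext p
  simp only [RingHom.mem_ker, funext_iff, Pi.zero_apply, hstalk, mem_faceIdeal_iff hunion,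
    Set.mem_ofPred_eq, Subtype.forall, not_exists, not_and]
  grind

theorem sections_subset_range_toBCStalks (V : AffineSubspace ℝ (I → ℝ)) (U : Set (Finset I))
    (hUflat : ∀ F ∈ U, IsFlat V F)
    (hUdown : ∀ E F : Finset I, IsFlat V E → E ⊆ F → F ∈ U → E ∈ U) :
    {s | ∀ (E F : U), E.1 ⊆ F.1 →
        ∀ hle : faceIdeal {S | BCFace V F.1 S} ≤ faceIdeal {S | BCFace V E.1 S},
          Ideal.Quotient.factor hle (s F) = s E} ⊆ Set.range (toBCStalks V U) := by
  intro s hs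
  choose q hq using fun F : U => Ideal.Quotient.mk_surjective (s F)
  have hrestrict : ∀ E F : U, E.1 ⊆ F.1 →
      Ideal.Quotient.mk (faceIdeal {S | BCFace V E.1 S}) (q F) = s E := fun E F hEF => by
    have hle : faceIdeal {S | BCFace V F.1 S} ≤ faceIdeal {S | BCFace V E.1 S} :=
      faceIdeal_antitone fun _ => BCFace.mono_flat (hUflat E E.2) (hUflat F F.2) hEF
    rw [← hs E F hEF hle, ← hq F, Ideal.Quotient.factor_mk]
  have hagree : ∀ F F' : U, ∀ d ∈ {d | BCFace V F.1 d.support},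
      d ∈ {d | BCFace V F'.1 d.support} → coeff d (q F) = coeff d (q F') := by
    intro F F' d hdF hdF'
    let E : U := ⟨F.1 ∩ F'.1, hUdown _ _ ((hUflat F F.2).inter (hUflat F' F'.2))
      Finset.inter_subset_left F.2⟩
    have hqE := (hrestrict E F Finset.inter_subset_left).trans
      (hrestrict E F' Finset.inter_subset_right).symm
    exact (mk_eq_mk_faceIdeal_iff (isLowerSet_setOf_bcFace _)).1 hqE d
      (BCFace.inter_right hdF hdF'.1)
  obtain ⟨p, hp⟩ := exists_coeff_eq_of_agree _ q hagree
  refine ⟨p, funext fun F => ?_⟩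
  exact hq F ▸ (mk_eq_mk_faceIdeal_iff (isLowerSet_setOf_bcFace _)).2 (hp F)

theorem stmt12 (V : AffineSubspace ℝ (I → ℝ))
    (U : Set (Finset I)) (hUflat : ∀ F ∈ U, IsFlat V F)
    (hUdown : ∀ E F : Finset I, IsFlat V E → E ⊆ F → F ∈ U → E ∈ U) :
    RingHom.ker (toBCStalks V U) = faceIdeal {S | ∃ F ∈ U, BCFace V F S} ∧
    Set.range (toBCStalks V U) =
      {s | ∀ (E F : U) (h : E.1 ⊆ F.1)
          (hle : faceIdeal {S | BCFace V F.1 S} ≤ faceIdeal {S | BCFace V E.1 S}),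
        Ideal.Quotient.factor hle (s F) = s E} := by
  refine ⟨ker_toBCStalks V U, ?_⟩
  refine (Set.range_subset_iff.2 fun p E F _ hle => ?_).antisymm
    (sections_subset_range_toBCStalks V U hUflat hUdown)
  exact Ideal.Quotient.factor_mk hle p
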